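/- Let X, Y, Z be complex Banach spaces and let A : X → Y and B : Y → Z be bounded linear operators with B ∘ A = 0. Suppose ker(B)/range(A) is finite-dimensional and range(B) is closed in Z. Then range(B*) is closed in Y', range(B*) ⊆ ker(A*), and the quotient ker(A*)/range(B*) is finite-dimensional; moreover, if N is a finite-dimensional subspace of Y with range(A) ⊕ N = ker(B), then range(B*) = ker(A*) ∩ N^⊥, where N^⊥ = { g ∈ Y' : g vanishes on N }. -/

import Mathlib

/-!
When `range B` is closed, the open mapping theorem makes `Y ⧸ ker B ≃ range B` an isomorphism of
topological vector spaces, so a functional vanishing on `ker B` descends to a continuous functional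
on `range B`, which Hahn–Banach extends to `Z`. Hence `range B* = (ker B)^⊥`, an intersection of
kernels of evaluation maps and therefore closed. Choosing `N` with `range A ⊔ N = ker B` splits
`(ker B)^⊥ = ker A* ∩ N^⊥`, so restriction to `N` embeds `ker A* / range B*` into the dual of the
finite-dimensional space `N`.
-/

/-- The dual (transpose) operator of a bounded linear operator `T : X → Y`,
sending a continuous linear functional `g` on `Y` to `g ∘ T`. -/
noncomputable def dualOp {X Y : Type*} [NormedAddCommGroup X] [NormedSpace ℂ X]
    [NormedAddCommGroup Y] [NormedSpace ℂ Y] (T : X →L[ℂ] Y) :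
    StrongDual ℂ Y →L[ℂ] StrongDual ℂ X :=
  (ContinuousLinearMap.compL ℂ X Y ℂ).flip T

open Topology LinearMap

namespace ContinuousLinearMap

variable {E F : Type*} [NormedAddCommGroup E] [CompleteSpace E] [NormedAddCommGroup F]
  [CompleteSpace F]

theorem isStrictMap_of_isClosed_range {𝕜 : Type*} [NontriviallyNormedField 𝕜] [NormedSpace 𝕜 E]
    [NormedSpace 𝕜 F] (B : E →L[𝕜] F)
    (hB : IsClosed (range (B : E →ₗ[𝕜] F) : Set F)) : IsStrictMap B := by
  have : CompleteSpace (range (B : E →ₗ[𝕜] F)) := hB.completeSpace_coe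
  have hsurj : Function.Surjective B.rangeRestrict :=
    LinearMap.surjective_rangeRestrict (B : E →ₗ[𝕜] F)
  exact (LinearMap.isStrictMap_iff_isOpenQuotientMap_rangeRestrict (f := (B : E →ₗ[𝕜] F))).2
    ⟨hsurj, B.rangeRestrict.continuous, B.rangeRestrict.isOpenMap hsurj⟩

theorem exists_comp_eq_of_ker_le {𝕜 : Type*} [RCLike 𝕜] [NormedSpace 𝕜 E] [NormedSpace 𝕜 F]
    (B : E →L[𝕜] F) (hB : IsClosed (range (B : E →ₗ[𝕜] F) : Set F))
    (g : StrongDual 𝕜 E) (hg : ker (B : E →ₗ[𝕜] F) ≤ ker (g : E →ₗ[𝕜] 𝕜)) :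
    ∃ h : StrongDual 𝕜 F, h.comp B = g := by
  let e := ContinuousLinearEquiv.quotKerEquivRange (isStrictMap_of_isClosed_range B hB)
  obtain ⟨h, hh, -⟩ := exists_extension_norm_eq (range (B : E →ₗ[𝕜] F))
    ((ker (B : E →ₗ[𝕜] F)).liftQL g hg ∘L e.symm.toContinuousLinearMap)
  refine ⟨h, ext fun y => ?_⟩
  have hextends := hh ⟨B y, mem_range_self (B : E →ₗ[𝕜] F) y⟩
  rw [comp_apply, hextends]
  exact congrArg _ (quotKerEquivRange_symm_apply_image (B : E →ₗ[𝕜] F) y _)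

end ContinuousLinearMap

theorem Submodule.exists_finiteDimensional_sup_eq {K V : Type*} [DivisionRing K] [AddCommGroup V]
    [Module K V] {P Q : Submodule K V} (hPQ : P ≤ Q)
    [FiniteDimensional K (Q ⧸ P.comap Q.subtype)] :
    ∃ N : Submodule K V, FiniteDimensional K N ∧ P ⊔ N = Q := by
  obtain ⟨N, hN⟩ := (P.comap Q.subtype).exists_isCompl
  have : FiniteDimensional K N := (Submodule.quotientEquivOfIsCompl _ N hN).finiteDimensional
  refine ⟨N.map Q.subtype, inferInstance, ?_⟩
  calc P ⊔ N.map Q.subtype = (P.comap Q.subtype ⊔ N).map Q.subtype := by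
        rw [Submodule.map_sup, Submodule.map_comap_subtype, inf_eq_right.2 hPQ]
    _ = Q := by rw [hN.sup_eq_top, Submodule.map_top, Submodule.range_subtype]

theorem Submodule.finiteDimensional_quotient_comap_of_mem_iff {K M W : Type*} [DivisionRing K]
    [AddCommGroup M] [Module K M] [AddCommGroup W] [Module K W] [FiniteDimensional K W]
    {V P : Submodule K M} (φ : M →ₗ[K] W) (hφ : ∀ v ∈ V, v ∈ P ↔ φ v = 0) :
    FiniteDimensional K (V ⧸ P.comap V.subtype) := by
  have : P.comap V.subtype = ker (φ ∘ₗ V.subtype) := by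
    ext v
    exact hφ v v.2
  rw [this]
  exact (φ ∘ₗ V.subtype).quotKerEquivRange.symm.finiteDimensional

section dualOp

variable {X Y Z : Type*} [NormedAddCommGroup X] [NormedSpace ℂ X]
  [NormedAddCommGroup Y] [NormedSpace ℂ Y] [NormedAddCommGroup Z] [NormedSpace ℂ Z]

@[simp]
theorem dualOp_apply (T : X →L[ℂ] Y) (g : StrongDual ℂ Y) : dualOp T g = g.comp T := rfl

theorem mem_ker_dualOp_iff_range_le (A : X →L[ℂ] Y) (g : StrongDual ℂ Y) :
    g ∈ ker (dualOp A : StrongDual ℂ Y →ₗ[ℂ] StrongDual ℂ X) ↔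
      range (A : X →ₗ[ℂ] Y) ≤ ker (g : Y →ₗ[ℂ] ℂ) := by
  rw [range_le_ker_iff, mem_ker, ContinuousLinearMap.coe_coe, dualOp_apply,
    ← ContinuousLinearMap.toLinearMap_comp, ← ContinuousLinearMap.toLinearMap_zero,
    ContinuousLinearMap.coe_inj]

variable [CompleteSpace Y] [CompleteSpace Z]

theorem mem_range_dualOp_iff_ker_le (B : Y →L[ℂ] Z)
    (hB : IsClosed (range (B : Y →ₗ[ℂ] Z) : Set Z)) (g : StrongDual ℂ Y) :
    g ∈ range (dualOp B : StrongDual ℂ Z →ₗ[ℂ] StrongDual ℂ Y) ↔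
      ker (B : Y →ₗ[ℂ] Z) ≤ ker (g : Y →ₗ[ℂ] ℂ) := by
  refine ⟨?_, fun hg => ?_⟩
  · rintro ⟨h, rfl⟩
    exact ker_le_ker_comp (B : Y →ₗ[ℂ] Z) (h : Z →ₗ[ℂ] ℂ)
  · obtain ⟨h, rfl⟩ := B.exists_comp_eq_of_ker_le hB g hg
    exact mem_range_self _ h

theorem isClosed_range_dualOp (B : Y →L[ℂ] Z)
    (hB : IsClosed (range (B : Y →ₗ[ℂ] Z) : Set Z)) :
    IsClosed (range (dualOp B : StrongDual ℂ Z →ₗ[ℂ] StrongDual ℂ Y) : Set (StrongDual ℂ Y)) := by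
  have : (range (dualOp B : StrongDual ℂ Z →ₗ[ℂ] StrongDual ℂ Y) : Set (StrongDual ℂ Y)) =
      ⋂ y ∈ ker (B : Y →ₗ[ℂ] Z), {g | g y = 0} := by
    ext g
    simp only [SetLike.mem_coe, mem_range_dualOp_iff_ker_le B hB, Set.mem_iInter₂,
      Set.mem_ofPred_eq]
    rfl
  rw [this]
  exact isClosed_biInter fun y _ => isClosed_eq (continuous_id.clm_apply continuous_const)
    continuous_const

variable {A : X →L[ℂ] Y} {B : Y →L[ℂ] Z} {N : Submodule ℂ Y}

theorem mem_range_dualOp_iff_of_sup_eq (hB : IsClosed (range (B : Y →ₗ[ℂ] Z) : Set Z))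
    (hN : range (A : X →ₗ[ℂ] Y) ⊔ N = ker (B : Y →ₗ[ℂ] Z)) (g : StrongDual ℂ Y) :
    g ∈ range (dualOp B : StrongDual ℂ Z →ₗ[ℂ] StrongDual ℂ Y) ↔
      g ∈ ker (dualOp A : StrongDual ℂ Y →ₗ[ℂ] StrongDual ℂ X) ∧ N ≤ ker (g : Y →ₗ[ℂ] ℂ) := by
  rw [mem_range_dualOp_iff_ker_le B hB, mem_ker_dualOp_iff_range_le, ← hN, sup_le_iff]

theorem mem_range_dualOp_iff_dualRestrict_eq_zero
    (hB : IsClosed (range (B : Y →ₗ[ℂ] Z) : Set Z))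
    (hN : range (A : X →ₗ[ℂ] Y) ⊔ N = ker (B : Y →ₗ[ℂ] Z)) {g : StrongDual ℂ Y}
    (hg : g ∈ ker (dualOp A : StrongDual ℂ Y →ₗ[ℂ] StrongDual ℂ X)) :
    g ∈ range (dualOp B : StrongDual ℂ Z →ₗ[ℂ] StrongDual ℂ Y) ↔
      N.dualRestrict (g : Y →ₗ[ℂ] ℂ) = 0 := by
  rw [mem_range_dualOp_iff_of_sup_eq hB hN, and_iff_right hg, ← mem_ker,
    N.dualRestrict_ker_eq_dualAnnihilator, Submodule.mem_dualAnnihilator]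
  rfl

end dualOp

theorem stmt14_general (X Y Z : Type*) [NormedAddCommGroup X] [NormedSpace ℂ X]
    [NormedAddCommGroup Y] [NormedSpace ℂ Y] [CompleteSpace Y]
    [NormedAddCommGroup Z] [NormedSpace ℂ Z] [CompleteSpace Z]
    (A : X →L[ℂ] Y) (B : Y →L[ℂ] Z) (hBA : B.comp A = 0)
    (hfin : FiniteDimensional ℂ
      (↥(LinearMap.ker (B : Y →ₗ[ℂ] Z)) ⧸
        Submodule.comap (LinearMap.ker (B : Y →ₗ[ℂ] Z)).subtype (LinearMap.range (A : X →ₗ[ℂ] Y))))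
    (hclosed : IsClosed (LinearMap.range (B : Y →ₗ[ℂ] Z) : Set Z)) :
    IsClosed (LinearMap.range (dualOp B : StrongDual ℂ Z →ₗ[ℂ] StrongDual ℂ Y) : Set (StrongDual ℂ Y)) ∧
    LinearMap.range (dualOp B : StrongDual ℂ Z →ₗ[ℂ] StrongDual ℂ Y) ≤ LinearMap.ker (dualOp A : StrongDual ℂ Y →ₗ[ℂ] StrongDual ℂ X) ∧
    FiniteDimensional ℂ
      (@HasQuotient.Quotient ↥(LinearMap.ker (dualOp A : StrongDual ℂ Y →ₗ[ℂ] StrongDual ℂ X))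
        (Submodule ℂ ↥(LinearMap.ker (dualOp A : StrongDual ℂ Y →ₗ[ℂ] StrongDual ℂ X)))
        (@Submodule.hasQuotient ℂ ↥(LinearMap.ker (dualOp A : StrongDual ℂ Y →ₗ[ℂ] StrongDual ℂ X)) _
          (LinearMap.ker (dualOp A : StrongDual ℂ Y →ₗ[ℂ] StrongDual ℂ X)).addCommGroup _)
        (Submodule.comap (LinearMap.ker (dualOp A : StrongDual ℂ Y →ₗ[ℂ] StrongDual ℂ X)).subtype (LinearMap.range (dualOp B : StrongDual ℂ Z →ₗ[ℂ] StrongDual ℂ Y)))) ∧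
    ∀ N : Submodule ℂ Y, FiniteDimensional ℂ N →
      Disjoint (LinearMap.range (A : X →ₗ[ℂ] Y)) N → LinearMap.range (A : X →ₗ[ℂ] Y) ⊔ N = LinearMap.ker (B : Y →ₗ[ℂ] Z) →
      ∀ g : StrongDual ℂ Y,
        (g ∈ LinearMap.range (dualOp B : StrongDual ℂ Z →ₗ[ℂ] StrongDual ℂ Y) ↔
          g ∈ LinearMap.ker (dualOp A : StrongDual ℂ Y →ₗ[ℂ] StrongDual ℂ X) ∧ ∀ n ∈ N, g n = 0) := by
  have hAB : range (A : X →ₗ[ℂ] Y) ≤ ker (B : Y →ₗ[ℂ] Z) := by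
    rw [range_le_ker_iff, ← ContinuousLinearMap.toLinearMap_comp, hBA]
    rfl
  obtain ⟨N, _, hN⟩ := Submodule.exists_finiteDimensional_sup_eq hAB
  refine ⟨isClosed_range_dualOp B hclosed,
    fun g hg => ((mem_range_dualOp_iff_of_sup_eq hclosed hN g).1 hg).1,
    Submodule.finiteDimensional_quotient_comap_of_mem_iff
      (N.dualRestrict ∘ₗ ContinuousLinearMap.coeLM ℂ)
      fun g hg => mem_range_dualOp_iff_dualRestrict_eq_zero hclosed hN hg,
    fun N' _ _ hN' g => mem_range_dualOp_iff_of_sup_eq hclosed hN' g⟩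

/-- Let `X, Y, Z` be complex Banach spaces, `A : X → Y`, `B : Y → Z`
bounded with `B ∘ A = 0`, `ker B / range A` finite-dimensional and `range B` closed. Then
`range B*` is closed, `range B* ⊆ ker A*`, the quotient `ker A* / range B*` is
finite-dimensional, and for every finite-dimensional subspace `N` of `Y` with
`range A ⊕ N = ker B` one has `range B* = ker A* ∩ N^⊥`. -/
theorem stmt14 (X Y Z : Type*) [NormedAddCommGroup X] [NormedSpace ℂ X] [CompleteSpace X]
    [NormedAddCommGroup Y] [NormedSpace ℂ Y] [CompleteSpace Y]
    [NormedAddCommGroup Z] [NormedSpace ℂ Z] [CompleteSpace Z]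
    (A : X →L[ℂ] Y) (B : Y →L[ℂ] Z) (hBA : B.comp A = 0)
    (hfin : FiniteDimensional ℂ
      (↥(LinearMap.ker (B : Y →ₗ[ℂ] Z)) ⧸
        Submodule.comap (LinearMap.ker (B : Y →ₗ[ℂ] Z)).subtype (LinearMap.range (A : X →ₗ[ℂ] Y))))
    (hclosed : IsClosed (LinearMap.range (B : Y →ₗ[ℂ] Z) : Set Z)) :
    IsClosed (LinearMap.range (dualOp B : StrongDual ℂ Z →ₗ[ℂ] StrongDual ℂ Y) : Set (StrongDual ℂ Y)) ∧
    LinearMap.range (dualOp B : StrongDual ℂ Z →ₗ[ℂ] StrongDual ℂ Y) ≤ LinearMap.ker (dualOp A : StrongDual ℂ Y →ₗ[ℂ] StrongDual ℂ X) ∧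
    FiniteDimensional ℂ
      (@HasQuotient.Quotient ↥(LinearMap.ker (dualOp A : StrongDual ℂ Y →ₗ[ℂ] StrongDual ℂ X))
        (Submodule ℂ ↥(LinearMap.ker (dualOp A : StrongDual ℂ Y →ₗ[ℂ] StrongDual ℂ X)))
        (@Submodule.hasQuotient ℂ ↥(LinearMap.ker (dualOp A : StrongDual ℂ Y →ₗ[ℂ] StrongDual ℂ X)) _
          (LinearMap.ker (dualOp A : StrongDual ℂ Y →ₗ[ℂ] StrongDual ℂ X)).addCommGroup _)
        (Submodule.comap (LinearMap.ker (dualOp A : StrongDual ℂ Y →ₗ[ℂ] StrongDual ℂ X)).subtype (LinearMap.range (dualOp B : StrongDual ℂ Z →ₗ[ℂ] StrongDual ℂ Y)))) ∧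
    ∀ N : Submodule ℂ Y, FiniteDimensional ℂ N →
      Disjoint (LinearMap.range (A : X →ₗ[ℂ] Y)) N → LinearMap.range (A : X →ₗ[ℂ] Y) ⊔ N = LinearMap.ker (B : Y →ₗ[ℂ] Z) →
      ∀ g : StrongDual ℂ Y,
        (g ∈ LinearMap.range (dualOp B : StrongDual ℂ Z →ₗ[ℂ] StrongDual ℂ Y) ↔
          g ∈ LinearMap.ker (dualOp A : StrongDual ℂ Y →ₗ[ℂ] StrongDual ℂ X) ∧ ∀ n ∈ N, g n = 0) :=
  stmt14_general X Y Z A B hBA hfin hclosed
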